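/- arXiv:1911.01133 — 2 statements merged into one kernel-verified Lean document; each statement's English description precedes it below -/
import Mathlib

section
/- Coercivity of the hypocoercive Lyapunov function: let κᶜ be a constant with |κᶜ| < ν √γ_m. Then there exist ε > 0 and M > 0 such that for all w, v ∈ ℝ² with |w| > M one has ½|v|² + P(w) − (κᶜ/ν)(w^⊥ · v) ≥ (ε/2)(|w|² + |v|²). -/
open Real Filter MeasureTheory intervalIntegral
open scoped RealInnerProductSpace Topology

noncomputable section

/-- Perpendicular rotation in the plane: `(a, b)^⊥ = (-b, a)`. -/
def perp (w : EuclideanSpace ℝ (Fin 2)) : EuclideanSpace ℝ (Fin 2) :=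
  (WithLp.equiv 2 (Fin 2 → ℝ)).symm ![-(w 1), w 0]

/-- The potential `P(w) = ∫_{r_p}^{‖w‖} r (f_d(r) − f_e(r)) dr`. -/
def pot (fd fe : ℝ → ℝ) (rp : ℝ) (w : EuclideanSpace ℝ (Fin 2)) : ℝ :=
  ∫ r in rp..‖w‖, r * (fd r - fe r)

/-!
Far out the kernel `f = f_d − f_e` exceeds any `β < γ_m`, so `P(w) ≥ β|w|²/2` for large `|w|`.
Choosing `β` strictly between `(κᶜ/ν)²` and `γ_m`, and bounding the cross term by
`|κᶜ/ν| |w| |v|`, the Lyapunov function dominates the binary quadratic form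
`½y² − kxy + ½βx²` in `x = |w|`, `y = |v|`, `k = |κᶜ|/ν`, which is positive definite because `k² < β`.
-/

lemma norm_perp (w : EuclideanSpace ℝ (Fin 2)) : ‖perp w‖ = ‖w‖ := by
  simp [perp, EuclideanSpace.norm_eq, Fin.sum_univ_two, Real.norm_eq_abs, sq_abs]
  ring_nf

lemma exists_pos_mul_sq_add_sq_le_of_sq_lt {k β : ℝ} (h : k ^ 2 < β) :
    ∃ ε : ℝ, 0 < ε ∧ ∀ x y : ℝ, ε / 2 * (x ^ 2 + y ^ 2) ≤ y ^ 2 / 2 - k * x * y + β / 2 * x ^ 2 := by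
  have hnear : ∀ᶠ ε in 𝓝 (0 : ℝ), ε < 1 ∧ k ^ 2 < (1 - ε) * (β - ε) :=
    (continuousAt_id.eventually_lt continuousAt_const one_pos).and
      (continuousAt_const.eventually_lt (by fun_prop) (by simpa using h))
  obtain ⟨ε, ⟨hε1, hεk⟩, hε0⟩ :=
    ((hnear.filter_mono nhdsWithin_le_nhds).and self_mem_nhdsWithin).exists (f := 𝓝[>] 0)
  refine ⟨ε, hε0, fun x y => ?_⟩
  -- `(1 - ε)` times the form minus `ε/2 (x² + y²)`, doubled, is this sum of squares
  have hsos : 0 ≤ ((1 - ε) * y - k * x) ^ 2 + ((1 - ε) * (β - ε) - k ^ 2) * x ^ 2 := by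
    have := sq_nonneg x
    positivity
  nlinarith

lemma le_integral_id_mul_of_le {g : ℝ → ℝ} {a R x β : ℝ} (ha : 0 ≤ a) (haR : a ≤ R)
    (hRx : R ≤ x) (hg : ContinuousOn g (Set.Ici a)) (hg_nonneg : ∀ r, a ≤ r → 0 ≤ g r)
    (hβ : ∀ r, R ≤ r → β ≤ g r) :
    β / 2 * (x ^ 2 - R ^ 2) ≤ ∫ r in a..x, r * g r := by
  have hint : ∀ b c, a ≤ b → b ≤ c → IntervalIntegrable (fun r => r * g r) volume b c :=
    fun b c hab hbc => ContinuousOn.intervalIntegrable_of_Icc hbc <|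
      continuousOn_id.mul (hg.mono fun r hr => hab.trans hr.1)
  have hhead : 0 ≤ ∫ r in a..R, r * g r :=
    integral_nonneg haR fun r hr => mul_nonneg (ha.trans hr.1) (hg_nonneg r hr.1)
  have htail : ∫ r in R..x, β * r ≤ ∫ r in R..x, r * g r :=
    integral_mono_on hRx ((continuous_const_mul β).intervalIntegrable _ _) (hint R x haR hRx) fun r hr => by
      rw [mul_comm]
      exact mul_le_mul_of_nonneg_left (hβ r hr.1) (ha.trans (haR.trans hr.1))
  rw [intervalIntegral.integral_const_mul, integral_id] at htail
  rw [← integral_add_adjacent_intervals (hint a R le_rfl haR) (hint R x haR hRx)]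
  linarith

lemma eventually_mul_sq_le_integral_id_mul {g : ℝ → ℝ} {a β γ : ℝ} (ha : 0 ≤ a)
    (hg : ContinuousOn g (Set.Ici a)) (hg_nonneg : ∀ r, a ≤ r → 0 ≤ g r)
    (hlim : Tendsto g atTop (𝓝 γ)) (hβγ : β < γ) :
    ∀ᶠ x in atTop, β / 2 * x ^ 2 ≤ ∫ r in a..x, r * g r := by
  obtain ⟨β', hββ', hβ'γ⟩ := exists_between hβγ
  obtain ⟨R, hR⟩ := eventually_atTop.1 ((eventually_ge_atTop a).and
    (hlim.eventually_const_le hβ'γ))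
  have hquad : Tendsto (fun x : ℝ => (β' - β) / 2 * x ^ 2) atTop atTop :=
    (tendsto_pow_atTop two_ne_zero).const_mul_atTop (by linarith)
  filter_upwards [eventually_ge_atTop R, hquad.eventually_ge_atTop (β' / 2 * R ^ 2)] with x hRx hx
  have := le_integral_id_mul_of_le ha (hR R le_rfl).1 hRx hg hg_nonneg
    (fun r hr => (hR r hr).2)
  linarith

theorem lyapunov_coercivity_general
    (fd fe : ℝ → ℝ) (rp γm : ℝ) (hrp : 0 < rp)
    (hfd_lip : LocallyLipschitzOn (Set.Ioi (0:ℝ)) fd)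
    (hfe_lip : LocallyLipschitzOn (Set.Ioi (0:ℝ)) fe)
    (hf_nonneg : ∀ r : ℝ, rp ≤ r → 0 ≤ fd r - fe r)
    (hfd_lim : Filter.Tendsto fd Filter.atTop (nhds γm))
    (hfe_lim : Filter.Tendsto fe Filter.atTop (nhds 0))
    (ν : ℝ) (hν : 0 < ν) (κc : ℝ) (hκc : |κc| < ν * Real.sqrt γm) :
    ∃ ε : ℝ, 0 < ε ∧ ∃ M : ℝ, 0 < M ∧
      ∀ w v : EuclideanSpace ℝ (Fin 2), M < ‖w‖ →
        ε / 2 * (‖w‖ ^ 2 + ‖v‖ ^ 2)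
          ≤ ‖v‖ ^ 2 / 2 + pot fd fe rp w - κc / ν * (inner ℝ (perp w) v : ℝ) := by
  set k := |κc| / ν
  have hkγ : k ^ 2 < γm :=
    (Real.lt_sqrt (by positivity)).1 <| (div_lt_iff₀ hν).2 (by linarith)
  obtain ⟨β, hkβ, hβγ⟩ := exists_between hkγ
  obtain ⟨ε, hε, hform⟩ := exists_pos_mul_sq_add_sq_le_of_sq_lt hkβ
  have hcont : ContinuousOn (fun r => fd r - fe r) (Set.Ici rp) :=
    (hfd_lip.continuousOn.sub hfe_lip.continuousOn).mono fun r hr => hrp.trans_le hr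
  obtain ⟨M, hM⟩ := eventually_atTop.1 <| eventually_mul_sq_le_integral_id_mul hrp.le hcont
    hf_nonneg (by simpa using hfd_lim.sub hfe_lim) hβγ
  refine ⟨ε, hε, max M 1, by positivity, fun w v hw => ?_⟩
  have hpot : β / 2 * ‖w‖ ^ 2 ≤ pot fd fe rp w := hM _ (le_max_left M 1 |>.trans hw.le)
  have hcross : κc / ν * ⟪perp w, v⟫ ≤ k * ‖w‖ * ‖v‖ :=
    calc κc / ν * ⟪perp w, v⟫ ≤ |κc / ν * ⟪perp w, v⟫| := le_abs_self _
      _ = k * |⟪perp w, v⟫| := by rw [abs_mul, abs_div, abs_of_pos hν]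
      _ ≤ k * (‖w‖ * ‖v‖) := by
        gcongr
        simpa [norm_perp] using abs_real_inner_le_norm (perp w) v
      _ = k * ‖w‖ * ‖v‖ := by ring
  linarith [hform ‖w‖ ‖v‖]

/-- Coercivity of the hypocoercive Lyapunov function: if `|κᶜ| < ν √γ_m`, then
there are `ε > 0` and `M > 0` such that for `|w| > M`,
`½|v|² + P(w) − (κᶜ/ν)(w^⊥·v) ≥ (ε/2)(|w|² + |v|²)`. -/
theorem lyapunov_coercivity
    (fd fe : ℝ → ℝ) (rp γm : ℝ) (hrp : 0 < rp) (hγm : 0 < γm)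
    (hfd_lip : LocallyLipschitzOn (Set.Ioi (0:ℝ)) fd)
    (hfe_lip : LocallyLipschitzOn (Set.Ioi (0:ℝ)) fe)
    (hf_neg : ∀ r : ℝ, 0 < r → r < rp → fd r - fe r < 0)
    (hf_nonneg : ∀ r : ℝ, rp ≤ r → 0 ≤ fd r - fe r)
    (hf_deriv : 0 < deriv (fun r => fd r - fe r) rp)
    (hfd_nonneg : ∀ r : ℝ, 0 < r → 0 ≤ fd r)
    (hfd_bdd : ∃ C : ℝ, ∀ r : ℝ, 0 < r → fd r ≤ C)
    (hfd_lim : Filter.Tendsto fd Filter.atTop (nhds γm))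
    (hfe_nonneg : ∀ r : ℝ, 0 < r → 0 ≤ fe r)
    (hfe_div : ¬ MeasureTheory.IntegrableOn (fun r => r * fe r) (Set.Ioc 0 rp))
    (hfe_lim : Filter.Tendsto fe Filter.atTop (nhds 0))
    (ν : ℝ) (hν : 0 < ν) (κc : ℝ) (hκc : |κc| < ν * Real.sqrt γm) :
    ∃ ε : ℝ, 0 < ε ∧ ∃ M : ℝ, 0 < M ∧
      ∀ w v : EuclideanSpace ℝ (Fin 2), M < ‖w‖ →
        ε / 2 * (‖w‖ ^ 2 + ‖v‖ ^ 2)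
          ≤ ‖v‖ ^ 2 / 2 + pot fd fe rp w - κc / ν * (inner ℝ (perp w) v : ℝ) :=
  lyapunov_coercivity_general fd fe rp γm hrp hfd_lip hfe_lip hf_nonneg hfd_lim hfe_lim ν hν κc hκc
end
end

section
/- Exponential decay of the rotational component in the pursuit mode: suppose κᶜ(t) ≡ 0 (with κᵖ arbitrary) and u solves the relative guidance-by-repulsion equation on [t₀, ∞) with u(t) ≠ 0 for all t. Then d/dt (u(t)^⊥ · u'(t)) = −ν (u(t)^⊥ · u'(t)) for all t ≥ t₀, and hence u(t)^⊥ · u'(t) = e^{−ν(t − t₀)} (u(t₀)^⊥ · u'(t₀)) for all t ≥ t₀. -/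
open Real Filter MeasureTheory intervalIntegral
open scoped RealInnerProductSpace Topology

noncomputable section

/-- The relative guidance-by-repulsion equation
`u'' + (κᵖ(t) f_d(|u|) − f_e(|u|)) u + ν u' = κᶜ(t) u^⊥` holds at time `t`. -/
def SolvesRel (fd fe : ℝ → ℝ) (ν : ℝ) (κp κc : ℝ → ℝ)
    (u : ℝ → EuclideanSpace ℝ (Fin 2)) (t : ℝ) : Prop :=
  deriv (deriv u) t + (κp t * fd ‖u t‖ - fe ‖u t‖) • u t + ν • deriv u t
    = κc t • perp (u t)

/-! Pairing the equation with `u^⊥` annihilates the radial force, because `⟪w^⊥, w⟫ = 0`, and turns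
the control term into `κᶜ ‖u‖²`: this is the balance law `(u^⊥·u')' = κᶜ ‖u‖² − ν u^⊥·u'`.
For `κᶜ ≡ 0` it is a linear scalar ODE, whose solution is pinned down by showing that
`e^{ν(t − t₀)} u^⊥·u'` has zero derivative. -/

theorem inner_perp (v w : EuclideanSpace ℝ (Fin 2)) : ⟪perp v, w⟫ = v 0 * w 1 - v 1 * w 0 := by
  simp [perp, PiLp.inner_apply, Fin.sum_univ_two]
  ring

theorem inner_perp_self (w : EuclideanSpace ℝ (Fin 2)) : ⟪perp w, w⟫ = 0 := by
  rw [inner_perp]; ring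

theorem inner_perp_perp (w : EuclideanSpace ℝ (Fin 2)) : ⟪perp w, perp w⟫ = ‖w‖ ^ 2 := by
  rw [inner_perp, EuclideanSpace.real_norm_sq_eq, Fin.sum_univ_two]
  simp [perp]
  ring

def perpCLM : EuclideanSpace ℝ (Fin 2) →L[ℝ] EuclideanSpace ℝ (Fin 2) :=
  LinearMap.toContinuousLinearMap
    { toFun := perp
      map_add' := fun v w => by ext i; fin_cases i <;> simp [perp]; ring
      map_smul' := fun c w => by ext i; fin_cases i <;> simp [perp] }

theorem HasDerivAt.inner_perp {u v : ℝ → EuclideanSpace ℝ (Fin 2)}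
    {u' v' : EuclideanSpace ℝ (Fin 2)} {t : ℝ} (hu : HasDerivAt u u' t) (hv : HasDerivAt v v' t) :
    HasDerivAt (fun s => ⟪perp (u s), v s⟫) (⟪perp u', v t⟫ + ⟪perp (u t), v'⟫) t := by
  rw [add_comm]
  exact (perpCLM.hasFDerivAt.comp_hasDerivAt t hu).inner ℝ hv

theorem eq_exp_mul_of_hasDerivAt {f : ℝ → ℝ} {c t0 : ℝ}
    (hf : ∀ t, t0 ≤ t → HasDerivAt f (c * f t) t) (t : ℝ) (ht : t0 ≤ t) :
    f t = exp (c * (t - t0)) * f t0 := by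
  have hg : ∀ s, t0 ≤ s → HasDerivAt (fun r => exp (c * (t0 - r)) * f r) 0 s := fun s hs =>
    ((((hasDerivAt_id' s).const_sub t0).const_mul c).exp.mul (hf s hs)).congr_deriv (by ring)
  have hconst := constant_of_has_deriv_right_zero
    (fun s hs => (hg s hs.1).continuousAt.continuousWithinAt)
    (fun s hs => (hg s hs.1).hasDerivWithinAt) t ⟨ht, le_rfl⟩
  simp only [sub_self, mul_zero, exp_zero, one_mul] at hconst
  have hinv : exp (c * (t - t0)) * exp (c * (t0 - t)) = 1 := by
    rw [← exp_add, ← exp_zero]; ring_nf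
  linear_combination exp (c * (t - t0)) * hconst - f t * hinv

theorem SolvesRel.hasDerivAt_inner_perp_deriv {fd fe : ℝ → ℝ} {ν : ℝ} {κp κc : ℝ → ℝ}
    {u : ℝ → EuclideanSpace ℝ (Fin 2)} {t : ℝ} (hu : DifferentiableAt ℝ u t)
    (hu' : DifferentiableAt ℝ (deriv u) t) (hsol : SolvesRel fd fe ν κp κc u t) :
    HasDerivAt (fun s => ⟪perp (u s), deriv u s⟫)
      (κc t * ‖u t‖ ^ 2 - ν * ⟪perp (u t), deriv u t⟫) t := by
  have hacc : deriv (deriv u) t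
      = κc t • perp (u t) - (κp t * fd ‖u t‖ - fe ‖u t‖) • u t - ν • deriv u t := by
    rw [← hsol]; abel
  convert hu.hasDerivAt.inner_perp hu'.hasDerivAt using 1
  simp only [hacc, inner_sub_right, inner_smul_right, inner_perp_self, inner_perp_perp]
  ring

theorem rotational_component_exponential_decay_general
    (fd fe : ℝ → ℝ)
    (ν : ℝ) (κp : ℝ → ℝ) (t0 : ℝ)
    (u : ℝ → EuclideanSpace ℝ (Fin 2)) (hu : ContDiff ℝ 2 u)
    (hsol : ∀ t : ℝ, t0 ≤ t → SolvesRel fd fe ν κp (fun _ => 0) u t) :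
    (∀ t : ℝ, t0 ≤ t →
      HasDerivAt (fun s => (inner ℝ (perp (u s)) (deriv u s) : ℝ))
        (-ν * (inner ℝ (perp (u t)) (deriv u t) : ℝ)) t) ∧
    (∀ t : ℝ, t0 ≤ t →
      (inner ℝ (perp (u t)) (deriv u t) : ℝ)
        = Real.exp (-ν * (t - t0)) * (inner ℝ (perp (u t0)) (deriv u t0) : ℝ)) := by
  have hdecay : ∀ t, t0 ≤ t →
      HasDerivAt (fun s => ⟪perp (u s), deriv u s⟫) (-ν * ⟪perp (u t), deriv u t⟫) t :=
    fun t ht => ((hsol t ht).hasDerivAt_inner_perp_deriv (hu.differentiable two_ne_zero t)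
      (hu.differentiable_deriv_two t)).congr_deriv (by ring)
  exact ⟨hdecay, eq_exp_mul_of_hasDerivAt hdecay⟩

/-- Exponential decay of the rotational component in the pursuit mode:
with `κᶜ ≡ 0`, the quantity `u^⊥ · u'` satisfies `d/dt (u^⊥·u') = −ν (u^⊥·u')` and hence
decays exactly exponentially from its value at `t₀`. -/
theorem rotational_component_exponential_decay
    (fd fe : ℝ → ℝ) (rp γm : ℝ) (hrp : 0 < rp) (hγm : 0 < γm)
    (hfd_lip : LocallyLipschitzOn (Set.Ioi (0:ℝ)) fd)
    (hfe_lip : LocallyLipschitzOn (Set.Ioi (0:ℝ)) fe)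
    (hf_neg : ∀ r : ℝ, 0 < r → r < rp → fd r - fe r < 0)
    (hf_nonneg : ∀ r : ℝ, rp ≤ r → 0 ≤ fd r - fe r)
    (hf_deriv : 0 < deriv (fun r => fd r - fe r) rp)
    (hfd_nonneg : ∀ r : ℝ, 0 < r → 0 ≤ fd r)
    (hfd_bdd : ∃ C : ℝ, ∀ r : ℝ, 0 < r → fd r ≤ C)
    (hfd_lim : Filter.Tendsto fd Filter.atTop (nhds γm))
    (hfe_nonneg : ∀ r : ℝ, 0 < r → 0 ≤ fe r)
    (hfe_div : ¬ MeasureTheory.IntegrableOn (fun r => r * fe r) (Set.Ioc 0 rp))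
    (hfe_lim : Filter.Tendsto fe Filter.atTop (nhds 0))
    (ν : ℝ) (hν : 0 < ν) (κp : ℝ → ℝ) (t0 : ℝ)
    (u : ℝ → EuclideanSpace ℝ (Fin 2)) (hu : ContDiff ℝ 2 u)
    (hsol : ∀ t : ℝ, t0 ≤ t → SolvesRel fd fe ν κp (fun _ => 0) u t)
    (hne : ∀ t : ℝ, t0 ≤ t → u t ≠ 0) :
    (∀ t : ℝ, t0 ≤ t →
      HasDerivAt (fun s => (inner ℝ (perp (u s)) (deriv u s) : ℝ))
        (-ν * (inner ℝ (perp (u t)) (deriv u t) : ℝ)) t) ∧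
    (∀ t : ℝ, t0 ≤ t →
      (inner ℝ (perp (u t)) (deriv u t) : ℝ)
        = Real.exp (-ν * (t - t0)) * (inner ℝ (perp (u t0)) (deriv u t0) : ℝ)) :=
  rotational_component_exponential_decay_general fd fe ν κp t0 u hu hsol
end
end
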